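/- Let r ≥ 3 and let S = { a ∈ ℕ^r : 2·∑_{j=1}^r a_j ≤ ∑_{j=1}^r j·a_j }. Then S is a subsemigroup of (ℕ^r, +), and every element of S is a finite sum (with repetitions allowed) of the following elements: the standard basis vectors e_s for 2 ≤ s ≤ r, and the vectors i·e_1 + e_s for 3 ≤ s ≤ r and 1 ≤ i ≤ s - 2. -/
import Mathlib


/-- The semigroup `S = {a ∈ ℕ^r : 2∑a_j ≤ ∑ j·a_j}` is closed under addition and
generated by the vectors `e_s` (2 ≤ s ≤ r) and `i·e_1 + e_s` (3 ≤ s ≤ r, 1 ≤ i ≤ s-2).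
(Coordinates are indexed by `Fin r`, the `s`-th coordinate corresponding to index `s-1`.) -/
theorem covariants_semigroup_generators (r : ℕ) (hr : 3 ≤ r)
    (S : Set (Fin r → ℕ))
    (hS : ∀ a : Fin r → ℕ, a ∈ S ↔
      2 * ∑ j : Fin r, a j ≤ ∑ j : Fin r, (j.val + 1) * a j)
    (G : Set (Fin r → ℕ))
    (hG : ∀ v : Fin r → ℕ, v ∈ G ↔
      (∃ s : Fin r, 2 ≤ s.val + 1 ∧ v = Pi.single s 1) ∨
      (∃ s : Fin r, ∃ i : ℕ, 3 ≤ s.val + 1 ∧ 1 ≤ i ∧ i + 2 ≤ s.val + 1 ∧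
        v = i • Pi.single (⟨0, by omega⟩ : Fin r) 1 + Pi.single s 1)) :
    (∀ a ∈ S, ∀ b ∈ S, a + b ∈ S) ∧ S ⊆ (AddSubmonoid.closure G : Set (Fin r → ℕ)) := by
  have hsum : ∀ a : Fin r → ℕ, ∑ j : Fin r, (j.val + 1) * a j
      = ∑ j : Fin r, j.val * a j + ∑ j : Fin r, a j := by
    intro a
    rw [← Finset.sum_add_distrib]
    exact Finset.sum_congr rfl fun j _ => by ring
  set z0 : Fin r := ⟨0, by omega⟩ with hz0
  have key : ∀ n (a : Fin r → ℕ), (∑ j : Fin r, a j) = n →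
      (∑ j : Fin r, a j ≤ ∑ j : Fin r, j.val * a j) →
      a ∈ AddSubmonoid.closure G := by
    intro n
    induction n using Nat.strong_induction_on with
    | _ n ih =>
      intro a hn hcond
      by_cases h0 : a z0 = 0
      · have ha : a = ∑ t : Fin r, a t • Pi.single t 1 := by
          funext j
          simp [Finset.sum_apply, Pi.single_apply]
        rw [ha]
        refine AddSubmonoid.sum_mem _ fun t _ => ?_
        by_cases hat : a t = 0
        · simp only [hat, zero_smul]
          exact zero_mem _
        · refine AddSubmonoid.nsmul_mem _ (AddSubmonoid.subset_closure ?_) _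
          rw [hG]
          left
          refine ⟨t, ?_, rfl⟩
          have htz : t ≠ z0 := fun h => hat (h ▸ h0)
          have : t.val ≠ 0 := fun h => htz (Fin.ext h)
          omega
      · have hex : ∃ t : Fin r, 2 ≤ t.val ∧ a t ≠ 0 := by
          by_contra hcon
          push_neg at hcon
          have hlt : ∑ j : Fin r, j.val * a j < ∑ j : Fin r, a j := by
            refine Finset.sum_lt_sum (fun j _ => ?_) ⟨z0, Finset.mem_univ _, ?_⟩
            · by_cases h2 : 2 ≤ j.val
              · simp [hcon j h2]
              · calc j.val * a j ≤ 1 * a j := Nat.mul_le_mul_right _ (by omega)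
                  _ = a j := one_mul _
            · have hzv : z0.val = 0 := rfl
              rw [hzv, Nat.zero_mul]
              omega
          omega
        obtain ⟨t, ht2, hat⟩ := hex
        have htz : t ≠ z0 := by
          intro h
          rw [h, hz0] at ht2
          simp at ht2
        set i : ℕ := min (a z0) (t.val - 1) with hi
        set g : Fin r → ℕ := i • Pi.single z0 1 + Pi.single t 1 with hg
        have hgG : g ∈ G := by
          rw [hG]; right
          exact ⟨t, i, by omega, by omega, by omega, rfl⟩
        have hgval : ∀ j, g j = i * (if j = z0 then 1 else 0) + (if j = t then 1 else 0) := by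
          intro j
          simp [hg, Pi.single_apply]
        have hle : ∀ j, g j ≤ a j := by
          intro j
          rw [hgval]
          rcases eq_or_ne j z0 with rfl | hj0
          · simp [Ne.symm htz]
            omega
          · rcases eq_or_ne j t with rfl | hjt
            · simp [hj0]
              omega
            · simp [hj0, hjt]
        have hsum_g : ∑ j : Fin r, g j = i + 1 := by
          rw [Finset.sum_congr rfl fun j _ => hgval j]
          rw [Finset.sum_add_distrib]
          simp [mul_ite, Finset.sum_ite_eq']
        have hsum_g' : ∑ j : Fin r, j.val * g j = t.val := by
          rw [Finset.sum_congr rfl fun j _ => by rw [hgval j]]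
          simp only [mul_add, mul_ite, mul_one, mul_zero]
          rw [Finset.sum_add_distrib]
          simp [Finset.sum_ite_eq', hz0, mul_comm]
        set a' : Fin r → ℕ := fun j => a j - g j with ha'
        have hs1 : ∑ j : Fin r, a j = ∑ j : Fin r, a' j + (i + 1) := by
          rw [← hsum_g, ← Finset.sum_add_distrib]
          refine Finset.sum_congr rfl fun j _ => ?_
          have := hle j
          simp only [ha']
          omega
        have hs2 : ∑ j : Fin r, j.val * a j = ∑ j : Fin r, j.val * a' j + t.val := by
          rw [← hsum_g', ← Finset.sum_add_distrib]
          refine Finset.sum_congr rfl fun j _ => ?_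
          have := hle j
          simp only [ha', ← mul_add]
          congr 1
          omega
        have hipos : 1 ≤ i := by
          simp only [hi]
          omega
        have hcond' : ∑ j : Fin r, a' j ≤ ∑ j : Fin r, j.val * a' j := by
          rcases le_or_gt (t.val - 1) (a z0) with hc | hc
          · have : i = t.val - 1 := by omega
            omega
          · have hia : i = a z0 := by omega
            refine Finset.sum_le_sum fun j _ => ?_
            rcases eq_or_ne j z0 with rfl | hj0
            · have : g z0 = i := by rw [hgval]; simp [Ne.symm htz]
              simp only [ha', this, hia]
              omega
            · have : 0 < j.val := by
                rcases Nat.eq_zero_or_pos j.val with h | h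
                · exact absurd (Fin.ext (h.trans rfl) : j = z0) hj0
                · exact h
              exact Nat.le_mul_of_pos_left _ this
        have ha'mem : a' ∈ AddSubmonoid.closure G := by
          refine ih (n - (i + 1)) (by omega) a' (by omega) hcond'
        have haeq : a = a' + g := by
          funext j
          have := hle j
          simp only [Pi.add_apply, ha']
          omega
        rw [haeq]
        exact AddSubmonoid.add_mem _ ha'mem (AddSubmonoid.subset_closure hgG)
  constructor
  · intro a ha b hb
    rw [hS] at ha hb ⊢
    simp only [Pi.add_apply, mul_add, Finset.sum_add_distrib] at ha hb ⊢
    omega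
  · intro a ha
    rw [hS, hsum a] at ha
    exact key _ a rfl (by omega)
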